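/- There exists a constant δ' = δ'(d) ∈ (0,1) such that the following holds for every choice of points x^{(i,+)} ∈ [−δ', δ']^d + e_i and x^{(i,−)} ∈ [−δ', δ']^d − e_i for i = 1, …, d. The polar dual P* := { y ∈ ℝ^d : x·y ≤ 1 for all x ∈ P } of the convex polytope P := conv( x^{(1,+)}, x^{(1,−)}, …, x^{(d,+)}, x^{(d,−)} ) satisfies P* ⊆ B_{2√d}(0). -/

import Mathlib

open Metric

/- Testing `y ∈ P*` against the perturbed vertices `xᵢ^± = ±eᵢ + uᵢ^±`
gives `±yᵢ ≤ 1 + δ'‖y‖₁`, so `‖y‖_∞ ≤ 1 + δ'‖y‖₁ ≤ 1 + d δ'‖y‖_∞`. For `d δ' ≤ 1/2` this forces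
`‖y‖_∞ ≤ 2`, hence `‖y‖ ≤ √d ‖y‖_∞ ≤ 2√d`. -/

theorem abs_le_two_mul_of_abs_le_add_mul_sum_abs {ι : Type*} [Fintype ι] {y : ι → ℝ} {a δ : ℝ}
    (hcard : Fintype.card ι * δ ≤ 1 / 2) (h : ∀ i, |y i| ≤ a + δ * ∑ j, |y j|)
    (i : ι) : |y i| ≤ 2 * a := by
  set S := ∑ j, |y j|
  have hS : S ≤ Fintype.card ι * (a + δ * S) := by
    simpa [mul_add] using Finset.sum_le_sum fun j (_ : j ∈ Finset.univ) => h j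
  have hcard_pos : (1 : ℝ) ≤ Fintype.card ι := by exact_mod_cast Fintype.card_pos_iff.mpr ⟨i⟩
  have hS_nonneg : 0 ≤ S := Finset.sum_nonneg fun j _ => abs_nonneg (y j)
  nlinarith [h i]

namespace EuclideanSpace

variable {ι : Type*} [Fintype ι]

theorem abs_inner_le_mul_sum_abs {u y : EuclideanSpace ℝ ι} {δ : ℝ} (hu : ∀ j, |u j| ≤ δ) :
    |inner ℝ u y| ≤ δ * ∑ j, |y j| := by
  rw [PiLp.inner_apply, Finset.mul_sum]
  calc |∑ j, inner ℝ (u j) (y j)| ≤ ∑ j, |inner ℝ (u j) (y j)| := Finset.abs_sum_le_sum_abs _ _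
    _ ≤ ∑ j, δ * |y j| := by
      gcongr with j
      rw [Real.inner_apply, abs_mul]
      exact mul_le_mul_of_nonneg_right (hu j) (abs_nonneg _)

theorem norm_le_sqrt_card_mul {y : EuclideanSpace ℝ ι} {c : ℝ} (hc : 0 ≤ c)
    (hy : ∀ j, |y j| ≤ c) : ‖y‖ ≤ √(Fintype.card ι) * c := by
  rw [EuclideanSpace.norm_eq, ← Real.sqrt_sq hc, ← Real.sqrt_mul (Nat.cast_nonneg _)]
  gcongr
  calc ∑ j, ‖y j‖ ^ 2 ≤ ∑ _j : ι, c ^ 2 := by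
        gcongr with j
        exact (Real.norm_eq_abs (y j)).symm ▸ hy j
    _ = Fintype.card ι * c ^ 2 := by simp

theorem abs_apply_le_of_inner_le_one [DecidableEq ι] {p m y : EuclideanSpace ℝ ι} {δ : ℝ} {i : ι}
    (hp : ∀ j, |p j - single i (1 : ℝ) j| ≤ δ) (hm : ∀ j, |m j - (-single i (1 : ℝ)) j| ≤ δ)
    (hpy : inner ℝ p y ≤ 1) (hmy : inner ℝ m y ≤ 1) : |y i| ≤ 1 + δ * ∑ j, |y j| := by
  have hp' := abs_le.mp (abs_inner_le_mul_sum_abs (y := y) (u := p - single i 1) hp)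
  have hm' := abs_le.mp (abs_inner_le_mul_sum_abs (y := y) (u := m - -single i 1) hm)
  simp only [inner_sub_left, inner_neg_left, inner_single_left, map_one, one_mul] at hp' hm'
  exact abs_le.mpr ⟨by linarith, by linarith⟩

end EuclideanSpace

/-- **Polar duals of perturbed cross-polytopes are bounded.**
There is a constant `δ' = δ'(d) ∈ (0,1)` such that the following holds for every choice of
points `x^{(i,+)} ∈ [-δ',δ']^d + e_i` and `x^{(i,-)} ∈ [-δ',δ']^d - e_i`, `i = 1,…,d`.
The polar dual `P* = {y : x·y ≤ 1 ∀ x ∈ P}` of the convex polytope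
`P = conv(x^{(1,+)}, x^{(1,-)}, …, x^{(d,+)}, x^{(d,-)})` satisfies `P* ⊆ B_{2√d}(0)`. -/
theorem polar_dual_bounded (d : ℕ) :
    ∃ δ' : ℝ, δ' ∈ Set.Ioo (0 : ℝ) 1 ∧
      ∀ (xp xm : Fin d → EuclideanSpace ℝ (Fin d)),
        (∀ i j, |xp i j - (EuclideanSpace.single i (1 : ℝ)) j| ≤ δ') →
        (∀ i j, |xm i j - (-(EuclideanSpace.single i (1 : ℝ))) j| ≤ δ') →
        {y : EuclideanSpace ℝ (Fin d) |
            ∀ x ∈ convexHull ℝ (Set.range xp ∪ Set.range xm), (inner ℝ x y : ℝ) ≤ 1}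
          ⊆ closedBall 0 (2 * Real.sqrt d) := by
  obtain ⟨δ, hδ_pos, hδ_lt, hdδ⟩ : ∃ δ : ℝ, 0 < δ ∧ δ < 1 ∧ d * δ ≤ 1 / 2 := by
    refine ⟨1 / (2 * d + 2), by positivity, ?_, ?_⟩
    · rw [div_lt_one (by positivity)]
      linarith [d.cast_nonneg (α := ℝ)]
    · rw [mul_one_div, div_le_div_iff₀ (by positivity) two_pos]
      linarith
  refine ⟨δ, ⟨hδ_pos, hδ_lt⟩, fun xp xm hxp hxm y hy => ?_⟩
  have hcoord (i : Fin d) : |y i| ≤ 1 + δ * ∑ j, |y j| :=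
    EuclideanSpace.abs_apply_le_of_inner_le_one (hxp i) (hxm i)
      (hy _ (subset_convexHull ℝ _ (.inl ⟨i, rfl⟩)))
      (hy _ (subset_convexHull ℝ _ (.inr ⟨i, rfl⟩)))
  have hcoord_two (i : Fin d) : |y i| ≤ 2 := by
    simpa using abs_le_two_mul_of_abs_le_add_mul_sum_abs (by simpa using hdδ) hcoord i
  rw [mem_closedBall_zero_iff, mul_comm]
  simpa using EuclideanSpace.norm_le_sqrt_card_mul two_pos.le hcoord_two
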